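/- Let G1 and G2 be graphs on n1 ≥ 1 and n2 ≥ 1 vertices and with m1 and m2 edges, respectively, and let G = G1 ∧ G2 be their join. Then min{ m1/n1 + n2/2 , m2/n2 + n1/2 } ≤ χ⃗(G). -/

import Mathlib

open SimpleGraph

/-! Fix a proper orientation of `G1 ∧ G2` with maximum indegree `k = χ⃗(G1 ∧ G2)`. The indegrees
of the vertices of `Gi` add up to `mi` plus the number of cross arcs entering `V(Gi)`. All `n1 * n2`
cross edges are oriented one way or the other, so some side `i` receives at least half of them,
whence `ni * k ≥ mi + n1 * n2 / 2`. -/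

/-- An orientation of a simple graph `G`: each edge gets exactly one direction.
`dir u v = true` means the edge `uv` is oriented from `u` toward `v` (head `v`). -/
structure Orient {V : Type*} (G : SimpleGraph V) where
  dir : V → V → Bool
  adj_of_dir : ∀ u v, dir u v = true → G.Adj u v
  dir_iff : ∀ u v, G.Adj u v → (dir u v = true ↔ ¬ dir v u = true)

def Orient.inDeg {V : Type*} [Fintype V] {G : SimpleGraph V} (D : Orient G) (v : V) : ℕ :=
  (Finset.univ.filter (fun u => D.dir u v = true)).card

def Orient.Proper {V : Type*} [Fintype V] {G : SimpleGraph V} (D : Orient G) : Prop :=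
  ∀ u v, G.Adj u v → D.inDeg u ≠ D.inDeg v

noncomputable def properOrientNum {V : Type*} [Fintype V] (G : SimpleGraph V) : ℕ :=
  sInf {k | ∃ D : Orient G, D.Proper ∧ ∀ v, D.inDeg v ≤ k}

def graphJoin {V1 V2 : Type*} (G1 : SimpleGraph V1) (G2 : SimpleGraph V2) :
    SimpleGraph (V1 ⊕ V2) where
  Adj x y :=
    match x, y with
    | .inl a, .inl b => G1.Adj a b
    | .inr a, .inr b => G2.Adj a b
    | .inl _, .inr _ => True
    | .inr _, .inl _ => True
  symm := by
    constructor
    rintro (a | a) (b | b) h <;> simp_all <;> exact h.symm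
  loopless := by
    constructor
    rintro (a | a) h <;> simp_all

namespace Orient

variable {V : Type*} {G : SimpleGraph V}

lemma dir_swap_eq_false {D : Orient G} {u v : V} (h : D.dir u v = true) : D.dir v u = false := by
  simpa using (D.dir_iff u v (D.adj_of_dir u v h)).1 h

lemma ite_dir_add_ite_dir [DecidableRel G.Adj] (D : Orient G) (u v : V) :
    ((if D.dir u v = true then 1 else 0) + if D.dir v u = true then 1 else 0) =
      if G.Adj u v then 1 else 0 := by
  by_cases huv : G.Adj u v
  · have := D.dir_iff u v huv
    by_cases h : D.dir u v = true <;> simp_all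
  · have h₁ : ¬D.dir u v = true := fun h => huv (D.adj_of_dir u v h)
    have h₂ : ¬D.dir v u = true := fun h => huv (D.adj_of_dir v u h).symm
    simp [h₁, h₂, huv]

def comap {W : Type*} {H : SimpleGraph W} (f : H ↪g G) (D : Orient G) : Orient H where
  dir a b := D.dir (f a) (f b)
  adj_of_dir _ _ h := f.map_adj_iff.1 (D.adj_of_dir _ _ h)
  dir_iff _ _ h := D.dir_iff _ _ (f.map_adj_iff.2 h)

instance [Finite V] : Finite (Orient G) :=
  Finite.of_injective Orient.dir fun D D' h => by cases D; cases D'; congr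

open scoped Classical in
noncomputable def ofWellOrder (G : SimpleGraph V) : Orient G where
  dir u v := decide (G.Adj u v ∧ WellOrderingRel u v)
  adj_of_dir _ _ h := (of_decide_eq_true h).1
  dir_iff u v huv := by
    simp only [decide_eq_true_iff, huv, huv.symm, true_and]
    refine ⟨fun h h' => asymm h h', fun h => ?_⟩
    rcases trichotomous_of WellOrderingRel u v with h' | rfl | h'
    exacts [h', (huv.ne rfl).elim, (h h').elim]

instance : Nonempty (Orient G) := ⟨ofWellOrder G⟩

def reverse [DecidableEq V] (D : Orient G) (e : Sym2 V) : Orient G where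
  dir a b := if s(a, b) = e then D.dir b a else D.dir a b
  adj_of_dir a b h := by
    split_ifs at h
    · exact (D.adj_of_dir b a h).symm
    · exact D.adj_of_dir a b h
  dir_iff a b hab := by
    rw [Sym2.eq_swap (a := b)]
    split_ifs
    · exact D.dir_iff b a hab.symm
    · exact D.dir_iff a b hab

section Fintype

variable [Fintype V] (D : Orient G)

lemma inDeg_le_card (v : V) : D.inDeg v ≤ Fintype.card V := Finset.card_le_univ _

lemma inDeg_eq_sum (v : V) : D.inDeg v = ∑ u, if D.dir u v = true then 1 else 0 :=
  Finset.card_filter _ _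

theorem sum_inDeg : ∑ v, D.inDeg v = Nat.card G.edgeSet := by
  classical
  have h : 2 * ∑ v, D.inDeg v = ∑ v, G.degree v := by
    simp only [inDeg_eq_sum, two_mul]
    nth_rw 2 [Finset.sum_comm]
    rw [← Finset.sum_add_distrib]
    refine Finset.sum_congr rfl fun v _ => ?_
    rw [← Finset.sum_add_distrib, degree, neighborFinset_eq_filter, Finset.card_filter]
    exact Finset.sum_congr rfl fun u _ => by rw [add_comm, D.ite_dir_add_ite_dir]
  rw [sum_degrees_eq_twice_card_edges, edgeFinset_card, ← Nat.card_eq_fintype_card] at h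
  omega

section Reverse

variable [DecidableEq V]

lemma inDeg_reverse_of_notMem {e : Sym2 V} {w : V} (hw : w ∉ e) :
    (D.reverse e).inDeg w = D.inDeg w := by
  unfold inDeg reverse
  congr 1
  ext a
  simp only [Finset.mem_filter, Finset.mem_univ, true_and]
  rw [if_neg (by rintro rfl; exact hw (Sym2.mem_mk_right a w))]

variable {D} {u v : V} (huv : D.dir u v = true)
include huv

lemma inDeg_reverse_tail : (D.reverse s(u, v)).inDeg u = D.inDeg u + 1 := by
  have hne : u ≠ v := (D.adj_of_dir u v huv).ne
  unfold inDeg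
  rw [← Finset.card_insert_of_notMem (a := v) (by simp [dir_swap_eq_false huv])]
  congr 1
  ext a
  by_cases hav : a = v
  · subst hav; simp [reverse, huv]
  · simp [reverse, hav, hne]

lemma inDeg_reverse_head : (D.reverse s(u, v)).inDeg v + 1 = D.inDeg v := by
  have hne : u ≠ v := (D.adj_of_dir u v huv).ne
  unfold inDeg
  rw [← Finset.card_insert_of_notMem (a := u) (by simp [reverse, dir_swap_eq_false huv])]
  congr 1
  ext a
  by_cases hau : a = u
  · subst hau; simp [huv]
  · simp [reverse, hau, hne.symm]

lemma sum_sq_inDeg_lt_reverse (heq : D.inDeg u = D.inDeg v) :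
    ∑ w, D.inDeg w ^ 2 < ∑ w, (D.reverse s(u, v)).inDeg w ^ 2 := by
  have hne : u ≠ v := (D.adj_of_dir u v huv).ne
  have hu := inDeg_reverse_tail huv
  have hv := inDeg_reverse_head huv
  have hdiff : ∑ w, (((D.reverse s(u, v)).inDeg w : ℤ) ^ 2 - (D.inDeg w : ℤ) ^ 2) = 2 := by
    rw [Fintype.sum_eq_add u v hne fun w ⟨hwu, hwv⟩ => by
      rw [inDeg_reverse_of_notMem D (by simp [hwu, hwv]), sub_self]]
    rw [hu, ← hv, heq, ← hv]
    push_cast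
    ring
  rw [Finset.sum_sub_distrib] at hdiff
  zify
  linarith

end Reverse

/-- An orientation maximising `∑ v, inDeg v ^ 2` is proper: reversing an arc between two vertices
of equal indegree `d` trades `d ^ 2 + d ^ 2` for `(d + 1) ^ 2 + (d - 1) ^ 2`. -/
theorem exists_proper (G : SimpleGraph V) : ∃ D : Orient G, D.Proper := by
  classical
  obtain ⟨D, hD⟩ := Finite.exists_max fun D : Orient G => ∑ w, D.inDeg w ^ 2
  refine ⟨D, fun u v huv heq => ?_⟩
  rcases Bool.eq_false_or_eq_true (D.dir u v) with h | h
  · exact (sum_sq_inDeg_lt_reverse h heq).not_ge (hD _)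
  · have h' : D.dir v u = true := by simpa [h] using (D.dir_iff v u huv.symm).2
    exact (sum_sq_inDeg_lt_reverse h' heq.symm).not_ge (hD _)

end Fintype

end Orient

theorem exists_proper_inDeg_le_properOrientNum {V : Type*} [Fintype V] (G : SimpleGraph V) :
    ∃ D : Orient G, D.Proper ∧ ∀ v, D.inDeg v ≤ properOrientNum G := by
  obtain ⟨D, hD⟩ := Orient.exists_proper G
  exact Nat.sInf_mem (s := {k | ∃ D : Orient G, D.Proper ∧ ∀ v, D.inDeg v ≤ k})
    ⟨_, D, hD, D.inDeg_le_card⟩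

namespace graphJoin

variable {V1 V2 : Type*} (G1 : SimpleGraph V1) (G2 : SimpleGraph V2)

def inl : G1 ↪g graphJoin G1 G2 := ⟨⟨Sum.inl, Sum.inl_injective⟩, Iff.rfl⟩

def inr : G2 ↪g graphJoin G1 G2 := ⟨⟨Sum.inr, Sum.inr_injective⟩, Iff.rfl⟩

end graphJoin

namespace Orient

variable {V1 V2 : Type*} [Fintype V1] [Fintype V2] {G1 : SimpleGraph V1} {G2 : SimpleGraph V2}
  (D : Orient (graphJoin G1 G2))

lemma sum_inDeg_inl : ∑ a, D.inDeg (.inl a) =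
    Nat.card G1.edgeSet + ∑ a, ∑ b, if D.dir (.inr b) (.inl a) = true then 1 else 0 := by
  rw [← (D.comap (graphJoin.inl G1 G2)).sum_inDeg, ← Finset.sum_add_distrib]
  refine Finset.sum_congr rfl fun a _ => ?_
  rw [inDeg_eq_sum, inDeg_eq_sum, Fintype.sum_sum_type]
  rfl

lemma sum_inDeg_inr : ∑ b, D.inDeg (.inr b) =
    Nat.card G2.edgeSet + ∑ b, ∑ a, if D.dir (.inl a) (.inr b) = true then 1 else 0 := by
  rw [← (D.comap (graphJoin.inr G1 G2)).sum_inDeg, ← Finset.sum_add_distrib]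
  refine Finset.sum_congr rfl fun b _ => ?_
  rw [inDeg_eq_sum, inDeg_eq_sum, Fintype.sum_sum_type, add_comm]
  rfl

lemma sum_cross_arcs :
    (∑ a, ∑ b, if D.dir (.inr b) (.inl a) = true then 1 else 0) +
      (∑ b, ∑ a, if D.dir (.inl a) (.inr b) = true then 1 else 0) =
      Fintype.card V1 * Fintype.card V2 := by
  classical
  rw [Finset.sum_comm (s := Finset.univ (α := V2)), ← Finset.sum_add_distrib]
  have hpair (a : V1) (b : V2) : ((if D.dir (.inr b) (.inl a) = true then 1 else 0) +
      if D.dir (.inl a) (.inr b) = true then 1 else 0) = 1 := by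
    rw [ite_dir_add_ite_dir, if_pos (by trivial)]
  simp only [← Finset.sum_add_distrib, hpair]
  simp

theorem card_edgeSet_add_le_or {k : ℕ} (hk : ∀ v, D.inDeg v ≤ k) :
    2 * Nat.card G1.edgeSet + Fintype.card V1 * Fintype.card V2 ≤ 2 * (Fintype.card V1 * k) ∨
      2 * Nat.card G2.edgeSet + Fintype.card V2 * Fintype.card V1 ≤
        2 * (Fintype.card V2 * k) := by
  have hle₁ : ∑ a, D.inDeg (.inl a) ≤ Fintype.card V1 * k := by
    simpa using Finset.sum_le_sum fun a (_ : a ∈ Finset.univ) => hk (.inl a)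
  have hle₂ : ∑ b, D.inDeg (.inr b) ≤ Fintype.card V2 * k := by
    simpa using Finset.sum_le_sum fun b (_ : b ∈ Finset.univ) => hk (.inr b)
  have hcross := D.sum_cross_arcs
  rw [D.sum_inDeg_inl] at hle₁
  rw [D.sum_inDeg_inr] at hle₂
  rw [mul_comm (Fintype.card V2)]
  omega

end Orient

lemma div_add_half_le_of_two_mul_add_le {m n n' k : ℕ} (hn : 0 < n)
    (h : 2 * m + n * n' ≤ 2 * (n * k)) : (m : ℚ) / n + n' / 2 ≤ k := by
  rw [div_add_div _ _ (by positivity) two_ne_zero, div_le_iff₀ (by positivity)]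
  have : (2 * m + n * n' : ℚ) ≤ 2 * (n * k) := by exact_mod_cast h
  linarith

/-- For the join `G = G1 ∧ G2` of two nonempty graphs with `n i` vertices and `m i`
edges, `min (m1/n1 + n2/2) (m2/n2 + n1/2) ≤ χ⃗(G)`. -/
theorem properOrientNum_join_lower {V1 V2 : Type*} [Fintype V1] [Fintype V2]
    [Nonempty V1] [Nonempty V2] (G1 : SimpleGraph V1) (G2 : SimpleGraph V2) :
    min ((Nat.card G1.edgeSet : ℚ) / (Fintype.card V1) + (Fintype.card V2) / 2)
        ((Nat.card G2.edgeSet : ℚ) / (Fintype.card V2) + (Fintype.card V1) / 2)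
      ≤ (properOrientNum (graphJoin G1 G2) : ℚ) := by
  obtain ⟨D, -, hD⟩ := exists_proper_inDeg_le_properOrientNum (graphJoin G1 G2)
  rcases D.card_edgeSet_add_le_or hD with h | h
  · exact min_le_of_left_le (div_add_half_le_of_two_mul_add_le Fintype.card_pos h)
  · exact min_le_of_right_le (div_add_half_le_of_two_mul_add_le Fintype.card_pos h)
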